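/- In the problem with observable costs, let S̄_t = σ̄_t(M_t) be an information state for observable costs and let Λ̄^n be the n-th iterate of the operator 𝒯̄ starting from Λ̄^0 ≡ 0. Then for every n ∈ ℕ, every t ∈ ℕ and every realization m_t of the memory: γ^{n+t}·c^min/(1−γ) + γ^t·Λ̄^n(σ̄_t(m_t)) + sup_{a_t ∈ [[A_t | m_t]]} a_t ≤ V_t(m_t) ≤ sup_{a_t ∈ [[A_t | m_t]]} a_t + γ^t·Λ̄^n(σ̄_t(m_t)) + γ^{n+t}·c^max/(1−γ). -/

import Mathlib

open Set Filter

noncomputable section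

/-- Hausdorff distance built from an arbitrary distance function `η`,
`ℋ(A,B) = max{sup_{a∈A} inf_{b∈B} η a b, sup_{b∈B} inf_{a∈A} η a b}`. -/
def hausd {α : Type*} (η : α → α → ℝ) (A B : Set α) : ℝ :=
  max (sSup ((fun a => sInf ((fun b => η a b) '' B)) '' A))
      (sSup ((fun b => sInf ((fun a => η a b) '' A)) '' B))

/-- The time-invariant DP operator `𝒯` for general information states:
`[𝒯Λ](s,z) = inf_u sup_{c,s'} (c + γ·Λ(s',γz) + ρ(c,s'|s,u)/z)`, the sup being over the
support of the cost distribution `ρ` (off the support `ρ = −∞`). -/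
def DPop {Ss Uu : Type*} (γ : ℝ) (ρ : ℝ → Ss → Ss → Uu → EReal)
    (Λ : Ss → ℝ → ℝ) (s : Ss) (z : ℝ) : ℝ :=
  sInf (Set.range fun u : Uu => sSup ((fun p : ℝ × Ss =>
    p.1 + γ * Λ p.2 (γ * z) + (ρ p.1 p.2 s u).toReal / z) '' {p | ρ p.1 p.2 s u ≠ ⊥}))

/-- Iterates `Λ^n = 𝒯^n Λ^0` starting from `Λ^0 ≡ 0`. -/
def DPopIter {Ss Uu : Type*} (γ : ℝ) (ρ : ℝ → Ss → Ss → Uu → EReal) : ℕ → Ss → ℝ → ℝ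
  | 0 => fun _ _ => 0
  | (n+1) => DPop γ ρ (DPopIter γ ρ n)

/-- The law-dependent operator `𝒯(π)`. -/
def DPopLaw {Ss Uu : Type*} (γ : ℝ) (ρ : ℝ → Ss → Ss → Uu → EReal) (π : Ss → ℝ → Uu)
    (Λ : Ss → ℝ → ℝ) (s : Ss) (z : ℝ) : ℝ :=
  sSup ((fun p : ℝ × Ss =>
    p.1 + γ * Λ p.2 (γ * z) + (ρ p.1 p.2 s (π s z)).toReal / z) '' {p | ρ p.1 p.2 s (π s z) ≠ ⊥})

/-- Iterates `𝒯(π)^n Λ^0` starting from `Λ^0 ≡ 0`. -/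
def DPopLawIter {Ss Uu : Type*} (γ : ℝ) (ρ : ℝ → Ss → Ss → Uu → EReal) (π : Ss → ℝ → Uu) :
    ℕ → Ss → ℝ → ℝ
  | 0 => fun _ _ => 0
  | (n+1) => DPopLaw γ ρ π (DPopLawIter γ ρ π n)

/-- The time-invariant DP operator `𝒯̄` for problems with observable costs:
`[𝒯̄Λ̄](s̄) = inf_u sup_{(c,s̄') ∈ F(s̄,u)} (c + γ·Λ̄(s̄'))` where `F s̄ u = [[C, S̄' | s̄, u]]`. -/
def DPopB {Sb Uu : Type*} (γ : ℝ) (F : Sb → Uu → Set (ℝ × Sb)) (Λ : Sb → ℝ) (s : Sb) : ℝ :=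
  sInf (Set.range fun u : Uu => sSup ((fun p : ℝ × Sb => p.1 + γ * Λ p.2) '' F s u))

/-- Iterates `Λ̄^n = 𝒯̄^n Λ̄^0` starting from `Λ̄^0 ≡ 0`. -/
def DPopBIter {Sb Uu : Type*} (γ : ℝ) (F : Sb → Uu → Set (ℝ × Sb)) : ℕ → Sb → ℝ
  | 0 => fun _ => 0
  | (n+1) => DPopB γ F (DPopBIter γ F n)

/-- The law-dependent observable-cost operator. -/
def DPopBLaw {Sb Uu : Type*} (γ : ℝ) (F : Sb → Uu → Set (ℝ × Sb)) (π : Sb → Uu)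
    (Λ : Sb → ℝ) (s : Sb) : ℝ :=
  sSup ((fun p : ℝ × Sb => p.1 + γ * Λ p.2) '' F s (π s))

/-- `β_t(T)` error coefficients, fuel-indexed: `beta γ e k t = β_t(t+k)` with
`β_T(T) = γ^T·e` and `β_t(T) = β_{t+1}(T) + γ^t·e`. -/
def beta (γ e : ℝ) : ℕ → ℕ → ℝ
  | 0, t => γ ^ t * e
  | (k+1), t => beta γ e k (t+1) + γ ^ t * e

/-- A partially observed non-stochastic input–output system with bounded costs:
disturbances `W_t ∈ 𝒲`, actions `U_t ∈ 𝒰`, observations `Y_0 = h_0(W_0)`,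
`Y_{t+1} = h_{t+1}(W_{0:t}, U_{0:t})`, and costs `C_t = d_t(W_{0:t}, U_{0:t}) ∈ 𝒞 ⊆ [cmin, cmax] ⊂ ℝ≥0`,
with a discount factor `γ ∈ (0,1)`. -/
structure Sys where
  W : Type
  U : Type
  Y : Type
  [hW : Nonempty W]
  [hU : Nonempty U]
  [hY : Nonempty Y]
  γ : ℝ
  cmin : ℝ
  cmax : ℝ
  h0 : W → Y
  h : (t : ℕ) → (Fin (t+1) → W) → (Fin (t+1) → U) → Y
  d : (t : ℕ) → (Fin (t+1) → W) → (Fin (t+1) → U) → ℝ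
  hγ0 : 0 < γ
  hγ1 : γ < 1
  hcmin : 0 ≤ cmin
  hcost : ∀ t ω υ, d t ω υ ∈ Set.Icc cmin cmax

attribute [instance] Sys.hW Sys.hU Sys.hY

namespace Sys

variable (S : Sys)

/-- `a^max = c^max/(1-γ)`. -/
def amax : ℝ := S.cmax / (1 - S.γ)

/-- Memory space at time `t`: `M_t = (Y_{0:t}, U_{0:t-1})`. -/
abbrev Mem (t : ℕ) : Type := (Fin (t+1) → S.Y) × (Fin t → S.U)

/-- Control strategies `g = (g_0, g_1, …)`, `U_t = g_t(M_t)`. -/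
abbrev Strat : Type := (t : ℕ) → S.Mem t → S.U

/-- The memory realization at time `0` generated by an initial observation `y_0`. -/
def mem0 (y : S.Y) : S.Mem 0 := (fun _ => y, Fin.elim0)

/-- Open-loop observation `Y_s` generated by disturbances `ω` and actions `u_{0:s-1}`. -/
def oy (ω : ℕ → S.W) : (s : ℕ) → (Fin s → S.U) → S.Y
  | 0, _ => S.h0 (ω 0)
  | (t+1), υ => S.h t (fun i : Fin (t+1) => ω i) υ

/-- Open-loop cost `C_t` generated by disturbances `ω` and actions `u_{0:t}`. -/
def oc (ω : ℕ → S.W) (t : ℕ) (υ : Fin (t+1) → S.U) : ℝ :=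
  S.d t (fun i : Fin (t+1) => ω i) υ

/-- Open-loop accrued cost `A_t = Σ_{ℓ<t} γ^ℓ C_ℓ`. -/
def oA (ω : ℕ → S.W) (t : ℕ) (υ : Fin t → S.U) : ℝ :=
  ∑ ℓ : Fin t, S.γ ^ (ℓ : ℕ) *
    S.oc ω ℓ (fun j : Fin ((ℓ : ℕ) + 1) => υ ⟨j, by have := j.isLt; have := ℓ.isLt; omega⟩)

/-- Open-loop memory at time `t` generated by disturbances `ω` and actions `u_{0:t-1}`. -/
def omem (ω : ℕ → S.W) (t : ℕ) (υ : Fin t → S.U) : S.Mem t :=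
  (fun i : Fin (t+1) =>
    S.oy ω i (fun j : Fin (i : ℕ) => υ ⟨j, by have := j.isLt; have := i.isLt; omega⟩), υ)

/-- Disturbance realizations consistent with the memory realization `m_t`. -/
def consistent (t : ℕ) (m : S.Mem t) : Set (ℕ → S.W) := {ω | S.omem ω t m.2 = m}

/-- `[[A_t | m_t]]`, the conditional range of the accrued cost. -/
def Arange (t : ℕ) (m : S.Mem t) : Set ℝ :=
  (fun ω => S.oA ω t m.2) '' S.consistent t m

/-- Closed-loop memory `M_t` generated by strategy `g` and disturbances `ω`. -/
def memOf (g : S.Strat) (ω : ℕ → S.W) : (t : ℕ) → S.Mem t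
  | 0 => (fun _ => S.h0 (ω 0), Fin.elim0)
  | (t+1) =>
    let m := memOf g ω t
    let us : Fin (t+1) → S.U := Fin.snoc m.2 (g t m)
    (Fin.snoc m.1 (S.h t (fun i : Fin (t+1) => ω i) us), us)

/-- Closed-loop action `U_t = g_t(M_t)`. -/
def act (g : S.Strat) (ω : ℕ → S.W) (t : ℕ) : S.U := g t (S.memOf g ω t)

/-- Closed-loop cost `C_t`. -/
def ccost (g : S.Strat) (ω : ℕ → S.W) (t : ℕ) : ℝ :=
  S.d t (fun i : Fin (t+1) => ω i) (fun i : Fin (t+1) => S.act g ω i)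

/-- Closed-loop accrued cost `A_t = Σ_{ℓ<t} γ^ℓ C_ℓ`. -/
def cA (g : S.Strat) (ω : ℕ → S.W) (t : ℕ) : ℝ :=
  ∑ ℓ ∈ Finset.range t, S.γ ^ ℓ * S.ccost g ω ℓ

/-- Closed-loop cost-to-go `C_t^∞ = Σ_{ℓ≥t} γ^{ℓ-t} C_ℓ`. -/
def cCinf (g : S.Strat) (ω : ℕ → S.W) (t : ℕ) : ℝ :=
  ∑' k : ℕ, S.γ ^ k * S.ccost g ω (t + k)

/-- Strategy value function
`V_t^g(m_t) = sup_{(a,c^∞) ∈ [[A_t, C_t^∞ | m_t]]^g} (a + γ^t c^∞)`. -/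
def V (g : S.Strat) (t : ℕ) (m : S.Mem t) : ℝ :=
  sSup ((fun ω => S.cA g ω t + S.γ ^ t * S.cCinf g ω t) '' {ω | S.memOf g ω t = m})

/-- Optimal value function `V_t(m_t) = inf_g V_t^g(m_t)`
(the infimum over strategies consistent with the realization `m_t`). -/
def Vopt (t : ℕ) (m : S.Mem t) : ℝ :=
  sInf ((fun g => S.V g t m) '' {g : S.Strat | ∃ ω, S.memOf g ω t = m})

/-- Strategy-dependent finite-horizon function, fuel-indexed:
`Jg g n t m = J_t^g(m_t; t+n)` with `J_T^g(m_T;T) = sup_{[[A_T,C_T|m_T]]^g}(a_T + γ^T c_T)` and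
`J_t^g(m_t;T) = sup_{m_{t+1} ∈ [[M_{t+1}|m_t]]^g} J_{t+1}^g(m_{t+1};T)`. -/
def Jg (g : S.Strat) : ℕ → (t : ℕ) → S.Mem t → ℝ
  | 0, t, m => sSup ((fun ω => S.cA g ω t + S.γ ^ t * S.ccost g ω t) '' {ω | S.memOf g ω t = m})
  | (n+1), t, m =>
    sSup ((fun ω => Jg g n (t+1) (S.memOf g ω (t+1))) '' {ω | S.memOf g ω t = m})

/-- Optimal finite-horizon function, fuel-indexed: `Jopt n t m = J_t(m_t; t+n)` with
`J_T(m_T;T) = inf_{u_T} sup_{[[A_T,C_T|m_T,u_T]]}(a_T + γ^T c_T)` and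
`J_t(m_t;T) = inf_{u_t} sup_{m_{t+1} ∈ [[M_{t+1}|m_t,u_t]]} J_{t+1}(m_{t+1};T)`. -/
def Jopt : ℕ → (t : ℕ) → S.Mem t → ℝ
  | 0, t, m => sInf (Set.range fun u : S.U =>
      sSup ((fun ω => S.oA ω t m.2 + S.γ ^ t * S.oc ω t (Fin.snoc m.2 u)) '' S.consistent t m))
  | (n+1), t, m => sInf (Set.range fun u : S.U =>
      sSup ((fun ω => Jopt n (t+1) (S.omem ω (t+1) (Fin.snoc m.2 u))) '' S.consistent t m))

/-- The conditional accrued distribution `r_t((c,s) | m_t, u_t)` of the pair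
`(C_t, S_{t+1})` where `S_{t+1} = σ_{t+1}(M_{t+1})`:
`r_t(x|y) = sup_{a ∈ [0,a^max]}(a + 𝕀(x,a|y)) − sup_{a ∈ [0,a^max]}(a + 𝕀(a|y))` in `ℝ ∪ {−∞}`. -/
def rcs {Ss : Type*} (σ : (t : ℕ) → S.Mem t → Ss) (t : ℕ) (c : ℝ) (s : Ss)
    (m : S.Mem t) (u : S.U) : EReal :=
  sSup ((fun a : ℝ => (a : EReal)) '' {a | a ∈ Set.Icc 0 S.amax ∧ ∃ ω ∈ S.consistent t m,
      S.oc ω t (Fin.snoc m.2 u) = c ∧ σ (t+1) (S.omem ω (t+1) (Fin.snoc m.2 u)) = s ∧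
      S.oA ω t m.2 = a}) -
  sSup ((fun a : ℝ => (a : EReal)) '' {a | a ∈ Set.Icc 0 S.amax ∧ ∃ ω ∈ S.consistent t m,
      S.oA ω t m.2 = a})

/-! ### Observable costs -/

/-- Memory space with observable costs: `M_t = (Y_{0:t}, C_{0:t-1}, U_{0:t-1})`. -/
abbrev MemO (t : ℕ) : Type := (Fin (t+1) → S.Y) × (Fin t → ℝ) × (Fin t → S.U)

/-- Strategies for the observable-cost problem. -/
abbrev StratO : Type := (t : ℕ) → S.MemO t → S.U

/-- The observable-cost memory realization at time `0` from an initial observation. -/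
def memO0 (y : S.Y) : S.MemO 0 := (fun _ => y, Fin.elim0, Fin.elim0)

/-- Open-loop observable-cost memory generated by `ω` and actions `u_{0:t-1}`. -/
def omemO (ω : ℕ → S.W) (t : ℕ) (υ : Fin t → S.U) : S.MemO t :=
  (fun i : Fin (t+1) =>
      S.oy ω i (fun j : Fin (i : ℕ) => υ ⟨j, by have := j.isLt; have := i.isLt; omega⟩),
   fun ℓ : Fin t =>
      S.oc ω ℓ (fun j : Fin ((ℓ : ℕ) + 1) => υ ⟨j, by have := j.isLt; have := ℓ.isLt; omega⟩),
   υ)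

/-- Disturbances consistent with an observable-cost memory realization. -/
def consistentO (t : ℕ) (m : S.MemO t) : Set (ℕ → S.W) := {ω | S.omemO ω t m.2.2 = m}

/-- `[[A_t | m_t]]` for the observable-cost problem. -/
def ArangeO (t : ℕ) (m : S.MemO t) : Set ℝ :=
  (fun ω => S.oA ω t m.2.2) '' S.consistentO t m

/-- Closed-loop observable-cost memory. -/
def memOfO (g : S.StratO) (ω : ℕ → S.W) : (t : ℕ) → S.MemO t
  | 0 => (fun _ => S.h0 (ω 0), Fin.elim0, Fin.elim0)
  | (t+1) =>
    let m := memOfO g ω t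
    let us : Fin (t+1) → S.U := Fin.snoc m.2.2 (g t m)
    (Fin.snoc m.1 (S.h t (fun i : Fin (t+1) => ω i) us),
     Fin.snoc m.2.1 (S.d t (fun i : Fin (t+1) => ω i) us), us)

/-- Closed-loop action for the observable-cost problem. -/
def actO (g : S.StratO) (ω : ℕ → S.W) (t : ℕ) : S.U := g t (S.memOfO g ω t)

/-- Closed-loop cost for the observable-cost problem. -/
def ccostO (g : S.StratO) (ω : ℕ → S.W) (t : ℕ) : ℝ :=
  S.d t (fun i : Fin (t+1) => ω i) (fun i : Fin (t+1) => S.actO g ω i)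

/-- Closed-loop accrued cost for the observable-cost problem. -/
def cAO (g : S.StratO) (ω : ℕ → S.W) (t : ℕ) : ℝ :=
  ∑ ℓ ∈ Finset.range t, S.γ ^ ℓ * S.ccostO g ω ℓ

/-- Closed-loop cost-to-go for the observable-cost problem. -/
def cCinfO (g : S.StratO) (ω : ℕ → S.W) (t : ℕ) : ℝ :=
  ∑' k : ℕ, S.γ ^ k * S.ccostO g ω (t + k)

/-- Strategy value function for the observable-cost problem. -/
def VO (g : S.StratO) (t : ℕ) (m : S.MemO t) : ℝ :=
  sSup ((fun ω => S.cAO g ω t + S.γ ^ t * S.cCinfO g ω t) '' {ω | S.memOfO g ω t = m})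

/-- Optimal value function for the observable-cost problem. -/
def VoptO (t : ℕ) (m : S.MemO t) : ℝ :=
  sInf ((fun g => S.VO g t m) '' {g : S.StratO | ∃ ω, S.memOfO g ω t = m})

/-- Optimal finite-horizon function for the observable-cost problem, fuel-indexed. -/
def JoptO : ℕ → (t : ℕ) → S.MemO t → ℝ
  | 0, t, m => sInf (Set.range fun u : S.U =>
      sSup ((fun ω => S.oA ω t m.2.2 + S.γ ^ t * S.oc ω t (Fin.snoc m.2.2 u)) ''
        S.consistentO t m))
  | (n+1), t, m => sInf (Set.range fun u : S.U =>
      sSup ((fun ω => JoptO n (t+1) (S.omemO ω (t+1) (Fin.snoc m.2.2 u))) '' S.consistentO t m))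

/-- `[[C_t, S̄_{t+1} | m_t, u_t]]`: conditional range of the current cost and next
(information-) state `S̄_{t+1} = σ̄_{t+1}(M_{t+1})` given the memory `m_t` and action `u_t`. -/
def CSrange {Sb : Type*} (σ : (t : ℕ) → S.MemO t → Sb) (t : ℕ) (m : S.MemO t) (u : S.U) :
    Set (ℝ × Sb) :=
  (fun ω => (S.oc ω t (Fin.snoc m.2.2 u), σ (t+1) (S.omemO ω (t+1) (Fin.snoc m.2.2 u)))) ''
    S.consistentO t m

/-- `[[C_t, Y_{t+1} | m_t, u_t]]`. -/
def CYrange (t : ℕ) (m : S.MemO t) (u : S.U) : Set (ℝ × S.Y) :=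
  (fun ω => (S.oc ω t (Fin.snoc m.2.2 u), S.oy ω (t+1) (Fin.snoc m.2.2 u))) '' S.consistentO t m

open Classical in
/-- Conditional indicator `𝕀((c_t, m_{t+1}) | m_t, u_t)` for the observable-cost problem. -/
def indObs (t : ℕ) (c : ℝ) (m' : S.MemO (t+1)) (m : S.MemO t) (u : S.U) : EReal :=
  if ∃ ω ∈ S.consistentO t m,
      S.oc ω t (Fin.snoc m.2.2 u) = c ∧ S.omemO ω (t+1) (Fin.snoc m.2.2 u) = m' then 0 else ⊥

/-- Conditional accrued distribution `r_t((c_t, m_{t+1}) | m_t, u_t)` for the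
observable-cost problem. -/
def rObs (t : ℕ) (c : ℝ) (m' : S.MemO (t+1)) (m : S.MemO t) (u : S.U) : EReal :=
  sSup ((fun a : ℝ => (a : EReal)) '' {a | a ∈ Set.Icc 0 S.amax ∧ ∃ ω ∈ S.consistentO t m,
      S.oc ω t (Fin.snoc m.2.2 u) = c ∧ S.omemO ω (t+1) (Fin.snoc m.2.2 u) = m' ∧
      S.oA ω t m.2.2 = a}) -
  sSup ((fun a : ℝ => (a : EReal)) '' {a | a ∈ Set.Icc 0 S.amax ∧ ∃ ω ∈ S.consistentO t m,
      S.oA ω t m.2.2 = a})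

end Sys

open Set

namespace Sys
variable (S : Sys)

def truncO {s r : ℕ} (h : r ≤ s) (m : S.MemO s) : S.MemO r :=
  (fun i => m.1 ⟨i, by omega⟩, fun i => m.2.1 ⟨i, by omega⟩, fun i => m.2.2 ⟨i, by omega⟩)

lemma truncO_omemO {r s : ℕ} (h : r ≤ s) (ω : ℕ → S.W) (υ : Fin s → S.U) :
    S.truncO h (S.omemO ω s υ) = S.omemO ω r (fun i => υ ⟨i, by omega⟩) := rfl

lemma memOfO_succ (g : S.StratO) (ω : ℕ → S.W) (t : ℕ) :
    S.memOfO g ω (t+1) =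
      (Fin.snoc (S.memOfO g ω t).1 (S.h t (fun i : Fin (t+1) => ω i)
          (Fin.snoc (S.memOfO g ω t).2.2 (g t (S.memOfO g ω t)))),
       Fin.snoc (S.memOfO g ω t).2.1 (S.d t (fun i : Fin (t+1) => ω i)
          (Fin.snoc (S.memOfO g ω t).2.2 (g t (S.memOfO g ω t)))),
       Fin.snoc (S.memOfO g ω t).2.2 (g t (S.memOfO g ω t))) := rfl

lemma memOfO_eq (g : S.StratO) (ω : ℕ → S.W) (t : ℕ) :
    S.memOfO g ω t = S.omemO ω t (fun i : Fin t => S.actO g ω i) := by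
  induction t with
  | zero =>
    refine Prod.ext ?_ (Prod.ext ?_ ?_)
    · funext i
      have : i = ⟨0, Nat.zero_lt_one⟩ := Fin.ext (by omega)
      subst this; rfl
    · funext i; exact i.elim0
    · funext i; exact i.elim0
  | succ t ih =>
    have h22 : (S.memOfO g ω t).2.2 = fun i : Fin t => S.actO g ω i := by rw [ih]; rfl
    have hus : (Fin.snoc (S.memOfO g ω t).2.2 (g t (S.memOfO g ω t)) : Fin (t+1) → S.U)
        = fun i : Fin (t+1) => S.actO g ω i := by
      funext i
      refine Fin.lastCases ?_ ?_ i
      · simp only [Fin.snoc_last]; rfl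
      · intro j; rw [Fin.snoc_castSucc, h22]; rfl
    rw [memOfO_succ, hus]
    refine Prod.ext ?_ (Prod.ext ?_ ?_)
    · funext i
      refine Fin.lastCases ?_ ?_ i
      · dsimp only
        rw [Fin.snoc_last]; rfl
      · intro j
        dsimp only
        rw [Fin.snoc_castSucc, ih]
        rfl
    · funext i
      refine Fin.lastCases ?_ ?_ i
      · dsimp only
        rw [Fin.snoc_last]; rfl
      · intro j
        dsimp only
        rw [Fin.snoc_castSucc, ih]
        rfl
    · rfl

lemma truncO_memOfO (g : S.StratO) (ω : ℕ → S.W) {r s : ℕ} (h : r ≤ s) :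
    S.truncO h (S.memOfO g ω s) = S.memOfO g ω r := by
  rw [memOfO_eq, memOfO_eq, truncO_omemO]

lemma consistent_of_memOfO {g : S.StratO} {ω : ℕ → S.W} {t : ℕ} {m : S.MemO t}
    (h : S.memOfO g ω t = m) : ω ∈ S.consistentO t m := by
  have h22 : m.2.2 = fun i : Fin t => S.actO g ω i := by rw [← h, memOfO_eq]; rfl
  show S.omemO ω t m.2.2 = m
  rw [h22, ← memOfO_eq, h]

lemma mem_consistent_succ {ω : ℕ → S.W} {t : ℕ} {m : S.MemO t} (u : S.U) :
    ω ∈ S.consistentO (t+1) (S.omemO ω (t+1) (Fin.snoc m.2.2 u)) := rfl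

end Sys
namespace Sys
variable (S : Sys)

lemma one_sub_γ_pos : 0 < 1 - S.γ := by linarith [S.hγ1]

lemma cmin_le_cmax : S.cmin ≤ S.cmax := by
  have := S.hcost 0 (fun _ => Classical.arbitrary S.W) (fun _ => Classical.arbitrary S.U)
  exact le_trans this.1 this.2

lemma cmax_nonneg : 0 ≤ S.cmax := le_trans S.hcmin (S.cmin_le_cmax)

lemma truncO_self {t : ℕ} (m : S.MemO t) : S.truncO le_rfl m = m := by
  refine Prod.ext ?_ (Prod.ext ?_ ?_) <;> funext i
  · exact congrArg m.1 (Fin.ext rfl)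
  · exact congrArg m.2.1 (Fin.ext rfl)
  · exact congrArg m.2.2 (Fin.ext rfl)

/-- `g` plays the actions of `m` along every consistent disturbance. -/
def Plays (g : S.StratO) (t : ℕ) (m : S.MemO t) : Prop :=
  ∀ ω ∈ S.consistentO t m, S.memOfO g ω t = m

lemma memOfO_eq_trunc (g : S.StratO) (t : ℕ) (m : S.MemO t)
    (hg : ∀ s (hs : s < t), g s (S.truncO hs.le m) = m.2.2 ⟨s, hs⟩)
    (ω : ℕ → S.W) (hω : ω ∈ S.consistentO t m) :
    ∀ s (hs : s ≤ t), S.memOfO g ω s = S.truncO hs m := by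
  have hmem : S.omemO ω t m.2.2 = m := hω
  intro s
  induction s with
  | zero =>
    intro hs
    refine Prod.ext ?_ (Prod.ext ?_ ?_)
    · funext i
      have : i = ⟨0, Nat.zero_lt_one⟩ := Fin.ext (by omega)
      subst this
      conv_rhs => rw [← hmem]
      rfl
    · funext i; exact i.elim0
    · funext i; exact i.elim0
  | succ s ih =>
    intro hs
    have hs' : s ≤ t := by omega
    have hst : s < t := by omega
    rw [memOfO_succ, ih hs']
    have hus : (Fin.snoc (S.truncO hs' m).2.2 (g s (S.truncO hs' m)) : Fin (s+1) → S.U)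
        = fun i : Fin (s+1) => m.2.2 ⟨i, by omega⟩ := by
      funext i
      refine Fin.lastCases ?_ ?_ i
      · rw [Fin.snoc_last, hg s hst]
        exact congrArg m.2.2 (Fin.ext rfl)
      · intro j; rw [Fin.snoc_castSucc]; rfl
    rw [hus]
    refine Prod.ext ?_ (Prod.ext ?_ ?_)
    · funext i
      refine Fin.lastCases ?_ ?_ i
      · dsimp only
        rw [Fin.snoc_last]
        conv_rhs => rw [← hmem]
        rfl
      · intro j; dsimp only; rw [Fin.snoc_castSucc]; rfl
    · funext i
      refine Fin.lastCases ?_ ?_ i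
      · dsimp only
        rw [Fin.snoc_last]
        conv_rhs => rw [← hmem]
        rfl
      · intro j; dsimp only; rw [Fin.snoc_castSucc]; rfl
    · rfl

lemma plays_of_exists {g : S.StratO} {t : ℕ} {m : S.MemO t}
    (h : ∃ ω₀, S.memOfO g ω₀ t = m) : S.Plays g t m := by
  obtain ⟨ω₀, h⟩ := h
  have hg : ∀ s (hs : s < t), g s (S.truncO hs.le m) = m.2.2 ⟨s, hs⟩ := by
    intro s hs
    have h1 : S.truncO hs.le m = S.memOfO g ω₀ s := by rw [← h, truncO_memOfO]
    have h2 : m.2.2 = fun i : Fin t => S.actO g ω₀ i := by rw [← h, memOfO_eq]; rfl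
    rw [h1, h2]
    rfl
  intro ω hω
  have := S.memOfO_eq_trunc g t m hg ω hω t le_rfl
  rwa [truncO_self] at this

/-- The strategy that plays the actions of `m` and then arbitrary actions. -/
def gbar (t : ℕ) (m : S.MemO t) : S.StratO := fun s =>
  if hs : s < t then fun _ => m.2.2 ⟨s, hs⟩ else fun _ => Classical.arbitrary S.U

lemma plays_gbar (t : ℕ) (m : S.MemO t) : S.Plays (S.gbar t m) t m := by
  intro ω hω
  have hg : ∀ s (hs : s < t), S.gbar t m s (S.truncO hs.le m) = m.2.2 ⟨s, hs⟩ := by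
    intro s hs; simp only [gbar, dif_pos hs]
  have := S.memOfO_eq_trunc (S.gbar t m) t m hg ω hω t le_rfl
  rwa [truncO_self] at this

/-- The accrued cost determined by the observable-cost memory. -/
def aval (t : ℕ) (m : S.MemO t) : ℝ := ∑ ℓ : Fin t, S.γ ^ (ℓ : ℕ) * m.2.1 ℓ

lemma oA_eq_aval {t : ℕ} {m : S.MemO t} {ω : ℕ → S.W} (hω : ω ∈ S.consistentO t m) :
    S.oA ω t m.2.2 = S.aval t m := by
  have hmem : S.omemO ω t m.2.2 = m := hω
  unfold oA aval
  refine Finset.sum_congr rfl fun ℓ _ => ?_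
  congr 1
  conv_rhs => rw [← hmem]
  rfl

lemma sSup_ArangeO {t : ℕ} {m : S.MemO t} (hm : (S.consistentO t m).Nonempty) :
    sSup (S.ArangeO t m) = S.aval t m := by
  have : S.ArangeO t m = {S.aval t m} := by
    apply Set.eq_singleton_iff_nonempty_unique_mem.2
    refine ⟨hm.image _, fun x hx => ?_⟩
    obtain ⟨ω, hω, rfl⟩ := hx
    exact S.oA_eq_aval hω
  rw [this, csSup_singleton]

lemma cost_mem_Icc (t : ℕ) (ω : Fin (t+1) → S.W) (υ : Fin (t+1) → S.U) :
    S.d t ω υ ∈ Set.Icc S.cmin S.cmax := S.hcost t ω υ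

lemma ccostO_mem (g : S.StratO) (ω : ℕ → S.W) (t : ℕ) :
    S.ccostO g ω t ∈ Set.Icc S.cmin S.cmax := S.hcost t _ _

lemma summable_cc (g : S.StratO) (ω : ℕ → S.W) (t : ℕ) :
    Summable (fun k => S.γ ^ k * S.ccostO g ω (t + k)) := by
  have h0 : 0 ≤ S.γ := le_of_lt S.hγ0
  apply Summable.of_nonneg_of_le
  · intro k
    exact mul_nonneg (pow_nonneg h0 k) (le_trans S.hcmin (S.ccostO_mem g ω (t+k)).1)
  · intro k
    exact mul_le_mul_of_nonneg_left (S.ccostO_mem g ω (t+k)).2 (pow_nonneg h0 k)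
  · exact (summable_geometric_of_lt_one h0 S.hγ1).mul_right _

lemma cCinfO_le (g : S.StratO) (ω : ℕ → S.W) (t : ℕ) :
    S.cCinfO g ω t ≤ S.cmax / (1 - S.γ) := by
  have h0 : 0 ≤ S.γ := le_of_lt S.hγ0
  have hsum : Summable (fun k => S.γ ^ k * S.cmax) :=
    (summable_geometric_of_lt_one h0 S.hγ1).mul_right _
  have := Summable.tsum_le_tsum (f := fun k => S.γ ^ k * S.ccostO g ω (t + k))
    (fun k => mul_le_mul_of_nonneg_left (S.ccostO_mem g ω (t+k)).2 (pow_nonneg h0 k))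
    (S.summable_cc g ω t) hsum
  calc S.cCinfO g ω t ≤ ∑' k : ℕ, S.γ ^ k * S.cmax := this
    _ = (1 - S.γ)⁻¹ * S.cmax := by rw [tsum_mul_right, tsum_geometric_of_lt_one h0 S.hγ1]
    _ = S.cmax / (1 - S.γ) := by ring

lemma le_cCinfO (g : S.StratO) (ω : ℕ → S.W) (t : ℕ) :
    S.cmin / (1 - S.γ) ≤ S.cCinfO g ω t := by
  have h0 : 0 ≤ S.γ := le_of_lt S.hγ0
  have hsum : Summable (fun k => S.γ ^ k * S.cmin) :=
    (summable_geometric_of_lt_one h0 S.hγ1).mul_right _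
  have := Summable.tsum_le_tsum (g := fun k => S.γ ^ k * S.ccostO g ω (t + k))
    (fun k => mul_le_mul_of_nonneg_left (S.ccostO_mem g ω (t+k)).1 (pow_nonneg h0 k))
    hsum (S.summable_cc g ω t)
  calc S.cmin / (1 - S.γ) = (1 - S.γ)⁻¹ * S.cmin := by ring
    _ = ∑' k : ℕ, S.γ ^ k * S.cmin := by rw [tsum_mul_right, tsum_geometric_of_lt_one h0 S.hγ1]
    _ ≤ S.cCinfO g ω t := this

lemma cCinfO_nonneg (g : S.StratO) (ω : ℕ → S.W) (t : ℕ) : 0 ≤ S.cCinfO g ω t :=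
  le_trans (div_nonneg S.hcmin (le_of_lt S.one_sub_γ_pos)) (S.le_cCinfO g ω t)

lemma cCinfO_succ (g : S.StratO) (ω : ℕ → S.W) (t : ℕ) :
    S.cCinfO g ω t = S.ccostO g ω t + S.γ * S.cCinfO g ω (t+1) := by
  unfold cCinfO
  rw [Summable.tsum_eq_zero_add (S.summable_cc g ω t)]
  congr 1
  · simp
  · have h : ∀ k : ℕ, S.γ ^ (k+1) * S.ccostO g ω (t + (k+1))
        = S.γ * (S.γ ^ k * S.ccostO g ω ((t+1) + k)) := by
      intro k
      rw [show t + (k+1) = (t+1) + k by omega]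
      ring
    rw [tsum_congr h, tsum_mul_left]

lemma cAO_succ (g : S.StratO) (ω : ℕ → S.W) (t : ℕ) :
    S.cAO g ω (t+1) = S.cAO g ω t + S.γ ^ t * S.ccostO g ω t :=
  Finset.sum_range_succ _ t

lemma cAO_eq_aval {g : S.StratO} {ω : ℕ → S.W} {t : ℕ} {m : S.MemO t}
    (h : S.memOfO g ω t = m) : S.cAO g ω t = S.aval t m := by
  have h21 : m.2.1 = fun ℓ : Fin t => S.ccostO g ω ℓ := by
    rw [← h, memOfO_eq]
    rfl
  unfold cAO aval
  rw [h21, Finset.sum_range]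

end Sys
namespace Sys
variable (S : Sys)

lemma snoc_lt {α : Sort*} {n : ℕ} (f : Fin n → α) (x : α) (j : ℕ) (h1 : j < n + 1)
    (h2 : j < n) : (Fin.snoc f x : Fin (n+1) → α) ⟨j, h1⟩ = f ⟨j, h2⟩ := by
  have h : (⟨j, h1⟩ : Fin (n+1)) = Fin.castSucc ⟨j, h2⟩ := Fin.ext rfl
  rw [h, Fin.snoc_castSucc]

lemma snoc_top {α : Sort*} {n : ℕ} (f : Fin n → α) (x : α) (h1 : n < n + 1) :
    (Fin.snoc f x : Fin (n+1) → α) ⟨n, h1⟩ = x := by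
  have h : (⟨n, h1⟩ : Fin (n+1)) = Fin.last n := Fin.ext rfl
  rw [h, Fin.snoc_last]

lemma snoc_eta {α : Sort*} {n : ℕ} (f : Fin n → α) (x : α) :
    (fun j : Fin (n+1) => (Fin.snoc f x : Fin (n+1) → α) ⟨j.1, j.2⟩) = Fin.snoc f x := by
  funext j; exact congrArg _ (Fin.ext rfl)

lemma trunc_snoc {α : Sort*} {n : ℕ} (f : Fin n → α) (x : α) :
    (fun j : Fin n => (Fin.snoc f x : Fin (n+1) → α) ⟨j.1, by omega⟩) = f := by
  funext j
  rw [snoc_lt f x j.1 (by omega) j.2]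

lemma memOfO_succ_eq {g : S.StratO} {t : ℕ} {m : S.MemO t} (hp : S.Plays g t m)
    {ω : ℕ → S.W} (hω : ω ∈ S.consistentO t m) :
    S.memOfO g ω (t+1) = S.omemO ω (t+1) (Fin.snoc m.2.2 (g t m)) := by
  have h22 : m.2.2 = fun i : Fin t => S.actO g ω i := by rw [← hp ω hω, memOfO_eq]; rfl
  rw [memOfO_eq]
  refine congrArg (S.omemO ω (t+1)) ?_
  funext i
  refine Fin.lastCases ?_ ?_ i
  · rw [Fin.snoc_last]
    show S.actO g ω t = g t m
    unfold actO
    rw [hp ω hω]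
  · intro j
    rw [Fin.snoc_castSucc, h22]
    rfl

lemma aval_succ {t : ℕ} {m : S.MemO t} {ω : ℕ → S.W} (hω : ω ∈ S.consistentO t m) (u : S.U) :
    S.aval (t+1) (S.omemO ω (t+1) (Fin.snoc m.2.2 u))
      = S.aval t m + S.γ ^ t * S.oc ω t (Fin.snoc m.2.2 u) := by
  have hmem : S.omemO ω t m.2.2 = m := hω
  unfold aval
  rw [Fin.sum_univ_castSucc]
  congr 1
  · refine Finset.sum_congr rfl fun ℓ _ => ?_
    congr 1
    show S.oc ω ℓ.1 (fun j : Fin (ℓ.1+1) => (Fin.snoc m.2.2 u : Fin (t+1) → S.U) ⟨j.1, by omega⟩)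
      = m.2.1 ℓ
    conv_rhs => rw [← hmem]
    show _ = S.oc ω ℓ.1 (fun j : Fin (ℓ.1+1) => m.2.2 ⟨j.1, by omega⟩)
    congr 1
    funext j
    exact snoc_lt m.2.2 u j.1 (by omega) (by omega)

lemma cAO_nonneg (g : S.StratO) (ω : ℕ → S.W) (t : ℕ) : 0 ≤ S.cAO g ω t := by
  apply Finset.sum_nonneg
  intro ℓ _
  exact mul_nonneg (pow_nonneg (le_of_lt S.hγ0) ℓ) (le_trans S.hcmin (S.ccostO_mem g ω ℓ).1)

lemma value_le {g : S.StratO} {t : ℕ} {m : S.MemO t} {ω : ℕ → S.W}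
    (hω : S.memOfO g ω t = m) :
    S.cAO g ω t + S.γ ^ t * S.cCinfO g ω t
      ≤ S.aval t m + S.γ ^ t * (S.cmax / (1 - S.γ)) := by
  rw [S.cAO_eq_aval hω]
  exact add_le_add_right (mul_le_mul_of_nonneg_left (S.cCinfO_le g ω t)
    (pow_nonneg (le_of_lt S.hγ0) t)) _

lemma VO_bddAbove (g : S.StratO) (t : ℕ) (m : S.MemO t) :
    BddAbove ((fun ω => S.cAO g ω t + S.γ ^ t * S.cCinfO g ω t) ''
      {ω | S.memOfO g ω t = m}) := by
  refine ⟨S.aval t m + S.γ ^ t * (S.cmax / (1 - S.γ)), ?_⟩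
  rintro x ⟨ω, hω, rfl⟩
  exact S.value_le hω

lemma le_VO {g : S.StratO} {t : ℕ} {m : S.MemO t} {ω : ℕ → S.W}
    (hω : S.memOfO g ω t = m) :
    S.cAO g ω t + S.γ ^ t * S.cCinfO g ω t ≤ S.VO g t m :=
  le_csSup (S.VO_bddAbove g t m) ⟨ω, hω, rfl⟩

lemma VO_le {g : S.StratO} {t : ℕ} {m : S.MemO t} (hp : S.Plays g t m)
    (hm : (S.consistentO t m).Nonempty) {b : ℝ}
    (hb : ∀ ω ∈ S.consistentO t m, S.cAO g ω t + S.γ ^ t * S.cCinfO g ω t ≤ b) :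
    S.VO g t m ≤ b := by
  apply csSup_le
  · obtain ⟨ω₀, hω₀⟩ := hm
    exact ⟨_, ⟨ω₀, hp ω₀ hω₀, rfl⟩⟩
  · rintro x ⟨ω, hω, rfl⟩
    exact hb ω (S.consistent_of_memOfO hω)

lemma VO_nonneg {g : S.StratO} {t : ℕ} {m : S.MemO t} (hex : ∃ ω, S.memOfO g ω t = m) :
    0 ≤ S.VO g t m := by
  obtain ⟨ω, hω⟩ := hex
  refine le_trans ?_ (S.le_VO hω)
  exact add_nonneg (S.cAO_nonneg g ω t)
    (mul_nonneg (pow_nonneg (le_of_lt S.hγ0) t) (S.cCinfO_nonneg g ω t))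

lemma value_succ_eq (g : S.StratO) (ω : ℕ → S.W) (t : ℕ) :
    S.cAO g ω (t+1) + S.γ ^ (t+1) * S.cCinfO g ω (t+1)
      = S.cAO g ω t + S.γ ^ t * S.cCinfO g ω t := by
  rw [S.cAO_succ, S.cCinfO_succ g ω t]
  ring

lemma VO_succ_le {g : S.StratO} {t : ℕ} {m : S.MemO t} {m' : S.MemO (t+1)}
    {ω₀ : ℕ → S.W} (hω₀ : S.memOfO g ω₀ (t+1) = m') (hω₀t : S.memOfO g ω₀ t = m) :
    S.VO g (t+1) m' ≤ S.VO g t m := by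
  have hne : ((fun ω => S.cAO g ω (t+1) + S.γ ^ (t+1) * S.cCinfO g ω (t+1)) ''
      {ω | S.memOfO g ω (t+1) = m'}).Nonempty := ⟨_, ⟨ω₀, hω₀, rfl⟩⟩
  apply csSup_le hne
  rintro x ⟨ω, hω, rfl⟩
  have ht : S.memOfO g ω t = m := by
    have e1 := S.truncO_memOfO g ω (Nat.le_succ t)
    have e2 := S.truncO_memOfO g ω₀ (Nat.le_succ t)
    rw [hω] at e1
    rw [hω₀] at e2
    rw [← e1, e2, hω₀t]
  dsimp only
  rw [S.value_succ_eq]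
  exact S.le_VO ht

end Sys
section DP
variable (S : Sys) {Sb : Type} [Nonempty Sb]
  (σ : (t : ℕ) → S.MemO t → Sb) (F : Sb → S.U → Set (ℝ × Sb))

lemma oc_mem (ω : ℕ → S.W) (t : ℕ) (υ : Fin (t+1) → S.U) :
    S.oc ω t υ ∈ Set.Icc S.cmin S.cmax := S.hcost t _ _

lemma DPopBIter_succ (n : ℕ) (s : Sb) :
    DPopBIter S.γ F (n+1) s = DPopB S.γ F (DPopBIter S.γ F n) s := rfl

theorem Lambda_bounds
    (hinfo : ∀ (t : ℕ) (m : S.MemO t) (u : S.U), S.CSrange σ t m u = F (σ t m) u)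
    (n : ℕ) : ∀ (t : ℕ) (m : S.MemO t), (S.consistentO t m).Nonempty →
      0 ≤ DPopBIter S.γ F n (σ t m) ∧ DPopBIter S.γ F n (σ t m) ≤ S.cmax / (1 - S.γ) := by
  induction n with
  | zero =>
    intro t m _
    exact ⟨le_refl 0, div_nonneg S.cmax_nonneg (le_of_lt S.one_sub_γ_pos)⟩
  | succ n ih =>
    intro t m hm
    have hγ0 : 0 ≤ S.γ := le_of_lt S.hγ0
    have hne : (1:ℝ) - S.γ ≠ 0 := ne_of_gt S.one_sub_γ_pos
    have hM : S.cmax + S.γ * (S.cmax / (1 - S.γ)) = S.cmax / (1 - S.γ) := by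
      field_simp
      ring
    have hbound : ∀ u : S.U, ∀ x ∈ (fun p : ℝ × Sb => p.1 + S.γ * DPopBIter S.γ F n p.2) ''
        F (σ t m) u, 0 ≤ x ∧ x ≤ S.cmax / (1 - S.γ) := by
      intro u x hx
      rw [← hinfo t m u] at hx
      obtain ⟨p, hp, rfl⟩ := hx
      obtain ⟨ω, hω, rfl⟩ := hp
      have hnext := ih (t+1) (S.omemO ω (t+1) (Fin.snoc m.2.2 u)) ⟨ω, S.mem_consistent_succ u⟩
      have hoc := oc_mem S ω t (Fin.snoc m.2.2 u)
      constructor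
      · have := mul_nonneg hγ0 hnext.1
        have := le_trans S.hcmin hoc.1
        dsimp only
        linarith
      · have h2 := mul_le_mul_of_nonneg_left hnext.2 hγ0
        dsimp only
        linarith [hoc.2]
    have hsup : ∀ u : S.U, 0 ≤ sSup ((fun p : ℝ × Sb => p.1 + S.γ * DPopBIter S.γ F n p.2) ''
        F (σ t m) u) := by
      intro u
      exact Real.sSup_nonneg (fun x hx => (hbound u x hx).1)
    have hbb : BddBelow (Set.range fun u : S.U =>
        sSup ((fun p : ℝ × Sb => p.1 + S.γ * DPopBIter S.γ F n p.2) '' F (σ t m) u)) := by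
      refine ⟨0, ?_⟩
      rintro b ⟨u, rfl⟩
      exact hsup u
    constructor
    · refine le_csInf (Set.range_nonempty _) ?_
      rintro b ⟨u, rfl⟩
      exact hsup u
    · apply csInf_le_of_le (b := sSup ((fun p : ℝ × Sb => p.1 + S.γ * DPopBIter S.γ F n p.2) ''
        F (σ t m) (Classical.arbitrary S.U))) hbb (Set.mem_range_self _)
      apply csSup_le
      · rw [← hinfo t m]
        exact (hm.image _).image _
      · exact fun x hx => (hbound _ x hx).2

end DP
section DP2
variable (S : Sys) {Sb : Type} [Nonempty Sb]
  (σ : (t : ℕ) → S.MemO t → Sb) (F : Sb → S.U → Set (ℝ × Sb))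

lemma CS_elem_bounds
    (hinfo : ∀ (t : ℕ) (m : S.MemO t) (u : S.U), S.CSrange σ t m u = F (σ t m) u)
    (n t : ℕ) (m : S.MemO t) (u : S.U) :
    ∀ x ∈ (fun p : ℝ × Sb => p.1 + S.γ * DPopBIter S.γ F n p.2) '' F (σ t m) u,
      0 ≤ x ∧ x ≤ S.cmax / (1 - S.γ) := by
  intro x hx
  rw [← hinfo t m u] at hx
  obtain ⟨p, ⟨ω, hω, rfl⟩, rfl⟩ := hx
  have hγ0 : 0 ≤ S.γ := le_of_lt S.hγ0
  have hnext := Lambda_bounds S σ F hinfo n (t+1) (S.omemO ω (t+1) (Fin.snoc m.2.2 u))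
    ⟨ω, S.mem_consistent_succ u⟩
  have hoc := oc_mem S ω t (Fin.snoc m.2.2 u)
  have hne : (1:ℝ) - S.γ ≠ 0 := ne_of_gt S.one_sub_γ_pos
  have hM : S.cmax + S.γ * (S.cmax / (1 - S.γ)) = S.cmax / (1 - S.γ) := by
    field_simp
    ring
  constructor
  · have := mul_nonneg hγ0 hnext.1
    have := le_trans S.hcmin hoc.1
    dsimp only
    linarith
  · have h2 := mul_le_mul_of_nonneg_left hnext.2 hγ0
    dsimp only
    linarith [hoc.2]

lemma CS_sup_nonneg
    (hinfo : ∀ (t : ℕ) (m : S.MemO t) (u : S.U), S.CSrange σ t m u = F (σ t m) u)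
    (n t : ℕ) (m : S.MemO t) (u : S.U) :
    0 ≤ sSup ((fun p : ℝ × Sb => p.1 + S.γ * DPopBIter S.γ F n p.2) '' F (σ t m) u) :=
  Real.sSup_nonneg (fun x hx => (CS_elem_bounds S σ F hinfo n t m u x hx).1)

lemma CS_bddAbove
    (hinfo : ∀ (t : ℕ) (m : S.MemO t) (u : S.U), S.CSrange σ t m u = F (σ t m) u)
    (n t : ℕ) (m : S.MemO t) (u : S.U) :
    BddAbove ((fun p : ℝ × Sb => p.1 + S.γ * DPopBIter S.γ F n p.2) '' F (σ t m) u) :=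
  ⟨S.cmax / (1 - S.γ), fun x hx => (CS_elem_bounds S σ F hinfo n t m u x hx).2⟩

lemma CS_bddBelow_range
    (hinfo : ∀ (t : ℕ) (m : S.MemO t) (u : S.U), S.CSrange σ t m u = F (σ t m) u)
    (n t : ℕ) (m : S.MemO t) :
    BddBelow (Set.range fun u : S.U =>
      sSup ((fun p : ℝ × Sb => p.1 + S.γ * DPopBIter S.γ F n p.2) '' F (σ t m) u)) := by
  refine ⟨0, ?_⟩
  rintro b ⟨u, rfl⟩
  exact CS_sup_nonneg S σ F hinfo n t m u

theorem lower_bound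
    (hinfo : ∀ (t : ℕ) (m : S.MemO t) (u : S.U), S.CSrange σ t m u = F (σ t m) u)
    (n : ℕ) : ∀ (t : ℕ) (m : S.MemO t), (S.consistentO t m).Nonempty →
      ∀ g : S.StratO, S.Plays g t m →
      S.aval t m + S.γ ^ t * DPopBIter S.γ F n (σ t m)
        + S.γ ^ (n+t) * (S.cmin / (1 - S.γ)) ≤ S.VO g t m := by
  have hγ0 : 0 ≤ S.γ := le_of_lt S.hγ0
  induction n with
  | zero =>
    intro t m hm g hp
    obtain ⟨ω₀, hω₀⟩ := hm
    have h1 := S.le_VO (hp ω₀ hω₀)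
    rw [S.cAO_eq_aval (hp ω₀ hω₀)] at h1
    have h2 := mul_le_mul_of_nonneg_left (S.le_cCinfO g ω₀ t) (pow_nonneg hγ0 t)
    have h3 : S.γ ^ (0+t) = S.γ ^ t := by rw [zero_add]
    simp only [DPopBIter]
    rw [h3]
    linarith
  | succ n ih =>
    intro t m hm g hp
    obtain ⟨ω₀, hω₀⟩ := hm
    set u := g t m with hu
    set L := S.cmin / (1 - S.γ) with hL
    set Λn := DPopBIter S.γ F n with hΛn
    have hΛle : DPopBIter S.γ F (n+1) (σ t m) ≤
        sSup ((fun p : ℝ × Sb => p.1 + S.γ * Λn p.2) '' F (σ t m) u) :=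
      csInf_le (CS_bddBelow_range S σ F hinfo n t m) (Set.mem_range_self u)
    have key : ∀ x ∈ (fun p : ℝ × Sb => p.1 + S.γ * Λn p.2) '' F (σ t m) u,
        S.aval t m + S.γ ^ t * x + S.γ ^ (n+1+t) * L ≤ S.VO g t m := by
      rw [← hinfo t m u]
      rintro x ⟨p, ⟨ω, hω, rfl⟩, rfl⟩
      set m' := S.omemO ω (t+1) (Fin.snoc m.2.2 u) with hm'
      have hω' : ω ∈ S.consistentO (t+1) m' := S.mem_consistent_succ u
      have hmem' : S.memOfO g ω (t+1) = m' := S.memOfO_succ_eq hp hω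
      have hp' : S.Plays g (t+1) m' := S.plays_of_exists ⟨ω, hmem'⟩
      have ihV := ih (t+1) m' ⟨ω, hω'⟩ g hp'
      have hVle : S.VO g (t+1) m' ≤ S.VO g t m := S.VO_succ_le hmem' (hp ω hω)
      have haval : S.aval (t+1) m' = S.aval t m + S.γ ^ t * S.oc ω t (Fin.snoc m.2.2 u) :=
        S.aval_succ hω u
      have hpow : S.γ ^ (n+(t+1)) = S.γ ^ (n+1+t) := by ring_nf
      have e1 : S.γ ^ t * (S.oc ω t (Fin.snoc m.2.2 u) + S.γ * Λn (σ (t+1) m'))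
          = S.γ ^ t * S.oc ω t (Fin.snoc m.2.2 u) + S.γ ^ (t+1) * Λn (σ (t+1) m') := by
        ring
      dsimp only
      rw [e1]
      rw [hpow] at ihV
      linarith
    have hne : ((fun p : ℝ × Sb => p.1 + S.γ * Λn p.2) '' F (σ t m) u).Nonempty := by
      rw [← hinfo t m u]
      exact (Set.Nonempty.image _ (Set.Nonempty.image _ ⟨ω₀, hω₀⟩))
    have hγt : (0:ℝ) < S.γ ^ t := pow_pos S.hγ0 t
    have hsup_le : sSup ((fun p : ℝ × Sb => p.1 + S.γ * Λn p.2) '' F (σ t m) u)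
        ≤ (S.VO g t m - S.aval t m - S.γ ^ (n+1+t) * L) / S.γ ^ t := by
      refine csSup_le hne (fun x hx => ?_)
      rw [le_div_iff₀ hγt]
      have := key x hx
      linarith
    have hfin := mul_le_mul_of_nonneg_left hsup_le (le_of_lt hγt)
    have hdiv : S.γ ^ t * ((S.VO g t m - S.aval t m - S.γ ^ (n+1+t) * L) / S.γ ^ t)
        = S.VO g t m - S.aval t m - S.γ ^ (n+1+t) * L := by
      field_simp
    rw [hdiv] at hfin
    have := mul_le_mul_of_nonneg_left hΛle (le_of_lt hγt)
    linarith

end DP2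
section DP3
variable (S : Sys) {Sb : Type} [Nonempty Sb]
  (σ : (t : ℕ) → S.MemO t → Sb) (F : Sb → S.U → Set (ℝ × Sb))

theorem upper_bound
    (hinfo : ∀ (t : ℕ) (m : S.MemO t) (u : S.U), S.CSrange σ t m u = F (σ t m) u)
    (n : ℕ) : ∀ (t : ℕ) (m : S.MemO t), (S.consistentO t m).Nonempty →
      ∀ ε : ℝ, 0 < ε → ∃ g : S.StratO, S.Plays g t m ∧
      S.VO g t m ≤ S.aval t m + S.γ ^ t * DPopBIter S.γ F n (σ t m)
        + S.γ ^ (n+t) * (S.cmax / (1 - S.γ)) + ε := by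
  have hγ0 : 0 ≤ S.γ := le_of_lt S.hγ0
  induction n with
  | zero =>
    intro t m hm ε hε
    refine ⟨S.gbar t m, S.plays_gbar t m, ?_⟩
    refine S.VO_le (S.plays_gbar t m) hm (fun ω hω => ?_)
    rw [S.cAO_eq_aval (S.plays_gbar t m ω hω)]
    have h2 := mul_le_mul_of_nonneg_left (S.cCinfO_le (S.gbar t m) ω t) (pow_nonneg hγ0 t)
    have h3 : S.γ ^ (0+t) = S.γ ^ t := by rw [zero_add]
    simp only [DPopBIter]
    rw [h3]
    linarith
  | succ n ih =>
    intro t m hm ε hε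
    set M := S.cmax / (1 - S.γ) with hM
    set Λn := DPopBIter S.γ F n with hΛn
    -- choose an ε/2-optimal action
    have hRne : (Set.range fun u : S.U =>
        sSup ((fun p : ℝ × Sb => p.1 + S.γ * Λn p.2) '' F (σ t m) u)).Nonempty :=
      Set.range_nonempty _
    have hlt : sInf (Set.range fun u : S.U =>
        sSup ((fun p : ℝ × Sb => p.1 + S.γ * Λn p.2) '' F (σ t m) u))
        < DPopBIter S.γ F (n+1) (σ t m) + ε/2 := by
      have : DPopBIter S.γ F (n+1) (σ t m) = sInf (Set.range fun u : S.U =>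
          sSup ((fun p : ℝ × Sb => p.1 + S.γ * Λn p.2) '' F (σ t m) u)) := rfl
      rw [← this]
      linarith
    obtain ⟨x, ⟨uε, rfl⟩, hx⟩ :=
      (csInf_lt_iff (CS_bddBelow_range S σ F hinfo n t m) hRne).1 hlt
    -- choose continuation strategies
    have hch : ∀ m' : S.MemO (t+1), ∃ g : S.StratO,
        (S.consistentO (t+1) m').Nonempty →
        S.Plays g (t+1) m' ∧ S.VO g (t+1) m' ≤ S.aval (t+1) m'
          + S.γ ^ (t+1) * Λn (σ (t+1) m') + S.γ ^ (n+(t+1)) * M + ε/2 := by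
      intro m'
      by_cases h : (S.consistentO (t+1) m').Nonempty
      · obtain ⟨g, hg1, hg2⟩ := ih (t+1) m' h (ε/2) (half_pos hε)
        exact ⟨g, fun _ => ⟨hg1, hg2⟩⟩
      · exact ⟨S.gbar (t+1) m', fun h' => absurd h' h⟩
    choose G hG using hch
    classical
    set g : S.StratO := fun s =>
      if hs : s < t then fun _ => m.2.2 ⟨s, hs⟩
      else if hst : s = t then fun _ => uε
      else fun m'' => G (S.truncO (by omega : t+1 ≤ s) m'') s m'' with hgdef
    have hg_lt : ∀ s (hs : s < t) (m'' : S.MemO s), g s m'' = m.2.2 ⟨s, hs⟩ := by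
      intro s hs m''
      simp only [hgdef, dif_pos hs]
    have hg_t : ∀ m'' : S.MemO t, g t m'' = uε := by
      intro m''
      simp [hgdef]
    have hg_gt : ∀ s (hs : t+1 ≤ s) (m'' : S.MemO s),
        g s m'' = G (S.truncO hs m'') s m'' := by
      intro s hs m''
      simp only [hgdef, dif_neg (by omega : ¬ s < t), dif_neg (by omega : ¬ s = t)]
    have hplays : S.Plays g t m := by
      intro ω hω
      have := S.memOfO_eq_trunc g t m (fun s hs => hg_lt s hs _) ω hω t le_rfl
      rwa [S.truncO_self] at this
    refine ⟨g, hplays, ?_⟩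
    refine S.VO_le hplays hm (fun ω hω => ?_)
    -- the next memory
    set m' := S.omemO ω (t+1) (Fin.snoc m.2.2 uε) with hm'
    have hω' : ω ∈ S.consistentO (t+1) m' := S.mem_consistent_succ uε
    have hGm' := hG m' ⟨ω, hω'⟩
    have hmem1 : S.memOfO g ω (t+1) = m' := by
      rw [S.memOfO_succ_eq hplays hω, hg_t m]
    have hmemG : S.memOfO (G m') ω (t+1) = m' := hGm'.1 ω hω'
    -- memories agree from t+1 on
    have hagree : ∀ s, t+1 ≤ s → S.memOfO g ω s = S.memOfO (G m') ω s := by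
      intro s hs
      induction s, hs using Nat.le_induction with
      | base => rw [hmem1, hmemG]
      | succ s hs ihs =>
        have hX : S.truncO hs (S.memOfO (G m') ω s) = m' := by
          rw [S.truncO_memOfO, hmemG]
        have hact : g s (S.memOfO (G m') ω s) = G m' s (S.memOfO (G m') ω s) := by
          rw [hg_gt s hs, hX]
        rw [Sys.memOfO_succ, Sys.memOfO_succ, ihs, hact]
    -- actions agree everywhere
    have hact_all : ∀ s : ℕ, S.actO g ω s = S.actO (G m') ω s := by
      have hfun : (fun i : Fin (t+1) => S.actO g ω i)
          = fun i : Fin (t+1) => S.actO (G m') ω i := by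
        have h1 : (S.memOfO g ω (t+1)).2.2 = fun i : Fin (t+1) => S.actO g ω i := by
          rw [S.memOfO_eq]; rfl
        have h2 : (S.memOfO (G m') ω (t+1)).2.2
            = fun i : Fin (t+1) => S.actO (G m') ω i := by
          rw [S.memOfO_eq]; rfl
        rw [← h1, ← h2, hmem1, hmemG]
      intro s
      rcases le_or_gt (t+1) s with h | h
      · show g s (S.memOfO g ω s) = G m' s (S.memOfO (G m') ω s)
        rw [hagree s h, hg_gt s h, S.truncO_memOfO, hmemG]
      · exact congrFun hfun ⟨s, h⟩
    have hcost_all : ∀ s : ℕ, S.ccostO g ω s = S.ccostO (G m') ω s := by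
      intro s
      unfold Sys.ccostO
      exact congrArg _ (funext fun i => hact_all i)
    have hcCinf : S.cCinfO g ω (t+1) = S.cCinfO (G m') ω (t+1) :=
      tsum_congr (fun k => by rw [hcost_all])
    -- value estimate
    have hc := oc_mem S ω t (Fin.snoc m.2.2 uε)
    have ha : S.cAO g ω (t+1) = S.aval (t+1) m' := S.cAO_eq_aval hmem1
    have hvse := S.value_succ_eq g ω t
    have hle1 : S.aval (t+1) m' + S.γ ^ (t+1) * S.cCinfO (G m') ω (t+1)
        ≤ S.VO (G m') (t+1) m' := by
      have h := S.le_VO hmemG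
      rwa [S.cAO_eq_aval hmemG] at h
    have hle2 := hGm'.2
    have haval : S.aval (t+1) m'
        = S.aval t m + S.γ ^ t * S.oc ω t (Fin.snoc m.2.2 uε) := S.aval_succ hω uε
    -- DP step
    have hmemCS : S.oc ω t (Fin.snoc m.2.2 uε) + S.γ * Λn (σ (t+1) m')
        ∈ (fun p : ℝ × Sb => p.1 + S.γ * Λn p.2) '' F (σ t m) uε := by
      rw [← hinfo t m uε]
      exact ⟨_, ⟨ω, hω, rfl⟩, rfl⟩
    have hsup := le_csSup (CS_bddAbove S σ F hinfo n t m uε) hmemCS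
    have hstep : S.oc ω t (Fin.snoc m.2.2 uε) + S.γ * Λn (σ (t+1) m')
        ≤ DPopBIter S.γ F (n+1) (σ t m) + ε/2 := le_trans hsup (le_of_lt hx)
    have hγt1 : S.γ ^ t ≤ 1 := pow_le_one₀ hγ0 (le_of_lt S.hγ1)
    have hγtpos : (0:ℝ) < S.γ ^ t := pow_pos S.hγ0 t
    have hmul := mul_le_mul_of_nonneg_left hstep (le_of_lt hγtpos)
    have e1 : S.γ ^ t * (S.oc ω t (Fin.snoc m.2.2 uε) + S.γ * Λn (σ (t+1) m'))
        = S.γ ^ t * S.oc ω t (Fin.snoc m.2.2 uε) + S.γ ^ (t+1) * Λn (σ (t+1) m') := by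
      ring
    rw [e1] at hmul
    have e2 : S.γ ^ t * (DPopBIter S.γ F (n+1) (σ t m) + ε/2)
        ≤ S.γ ^ t * DPopBIter S.γ F (n+1) (σ t m) + ε/2 := by
      have hnn : 0 ≤ ε/2 := le_of_lt (half_pos hε)
      nlinarith
    have e3 : S.γ ^ (n+(t+1)) * M ≤ S.γ ^ (n+1+t) * M := by
      have : S.γ ^ (n+(t+1)) = S.γ ^ (n+1+t) := by ring_nf
      rw [this]
    rw [hcCinf] at hvse
    linarith
end DP3
theorem stmt13 (S : Sys) {Sb : Type} [Nonempty Sb] [MetricSpace Sb]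
    (hSb : Bornology.IsBounded (Set.univ : Set Sb))
    (σ : (t : ℕ) → S.MemO t → Sb) (F : Sb → S.U → Set (ℝ × Sb))
    (hinfo : ∀ (t : ℕ) (m : S.MemO t) (u : S.U), S.CSrange σ t m u = F (σ t m) u)
    (n t : ℕ) (m : S.MemO t) (hm : (S.consistentO t m).Nonempty) :
    S.γ ^ (n+t) * S.cmin / (1 - S.γ) + S.γ ^ t * DPopBIter S.γ F n (σ t m)
        + sSup (S.ArangeO t m) ≤ S.VoptO t m ∧
      S.VoptO t m ≤ sSup (S.ArangeO t m) + S.γ ^ t * DPopBIter S.γ F n (σ t m)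
        + S.γ ^ (n+t) * S.cmax / (1 - S.γ) := by
  obtain ⟨ω₀, hω₀⟩ := hm
  have hm : (S.consistentO t m).Nonempty := ⟨ω₀, hω₀⟩
  rw [S.sSup_ArangeO hm]
  have hgbar : S.memOfO (S.gbar t m) ω₀ t = m := S.plays_gbar t m ω₀ hω₀
  have hbdd : BddBelow ((fun g => S.VO g t m) '' {g : S.StratO | ∃ ω, S.memOfO g ω t = m}) := by
    refine ⟨0, ?_⟩
    rintro b ⟨g', hg', rfl⟩
    exact S.VO_nonneg hg'
  constructor
  · refine le_csInf ⟨_, ⟨S.gbar t m, ⟨ω₀, hgbar⟩, rfl⟩⟩ ?_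
    rintro b ⟨g, hg, rfl⟩
    have hp : S.Plays g t m := S.plays_of_exists hg
    have := lower_bound S σ F hinfo n t m hm g hp
    have e : S.γ ^ (n+t) * S.cmin / (1 - S.γ) = S.γ ^ (n+t) * (S.cmin / (1 - S.γ)) := by
      ring
    linarith
  · refine le_of_forall_pos_le_add (fun ε hε => ?_)
    obtain ⟨g, hp, hV⟩ := upper_bound S σ F hinfo n t m hm ε hε
    have hmem : S.VO g t m ∈ (fun g => S.VO g t m) '' {g : S.StratO | ∃ ω, S.memOfO g ω t = m} :=
      ⟨g, ⟨ω₀, hp ω₀ hω₀⟩, rfl⟩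
    have hle : S.VoptO t m ≤ S.VO g t m := csInf_le hbdd hmem
    have e : S.γ ^ (n+t) * S.cmax / (1 - S.γ) = S.γ ^ (n+t) * (S.cmax / (1 - S.γ)) := by
      ring
    linarith
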